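/- Let H be a real Hilbert space, A : H → 2^H a maximally monotone operator and B : H → H a β-cocoercive operator for some β > 0 such that zer(A + B) ≠ ∅. Let t₀ > 0, α > 1, ξ ≥ 0, and let λ : [t₀,∞) → (0,∞) and γ : [t₀,∞) → (0, 2β) be differentiable. If x : [t₀,∞) → H is a classic (C²) global solution of (Split-DIN-AVD) and x̄ ∈ zer(A + B), then for every t ≥ t₀: ‖(d/dt)(λ(t) T_{λ(t),γ(t)}(x(t)))‖ ≤ 4‖ẋ(t)‖ + 4β(|γ̇(t)|/γ(t))‖B(x(t))‖ + 2(|γ̇(t)|/γ(t))‖x(t) − x̄‖. -/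

import Mathlib

/-!
Since `λ T_{λ,γ}(x) = x − J_{γA}(x − γBx)` does not depend on `λ`, it suffices to bound the
difference quotients of this residual. The forward-backward map `J_{γA} ∘ (Id − γB)` is
nonexpansive for `γ ≤ 2β` and fixes every zero `x̄` of `A + B`, so the residual is `2`-Lipschitz
in `x`. The resolvent identity `J_{γA} u = J_{δA}((δ/γ) u + (1 − δ/γ) J_{γA} u)` makes it
Lipschitz in `γ` as well, with constant `2‖Bx‖ + (2/γ)‖x − x̄‖`. Letting the difference quotients
converge gives `‖(λT)'‖ ≤ 2‖ẋ‖ + |γ̇| (2‖Bx‖ + (2/γ)‖x − x̄‖)`, and `γ < 2β` finishes.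
-/

open scoped InnerProductSpace
open Filter Asymptotics MeasureTheory

variable {H : Type*} [NormedAddCommGroup H] [InnerProductSpace ℝ H] [CompleteSpace H]

/-- A set-valued operator `A : H → 2^H` is monotone. -/
def IsMonotoneOp (A : H → Set H) : Prop :=
  ∀ x y u v : H, u ∈ A x → v ∈ A y → 0 ≤ ⟪u - v, x - y⟫_ℝ

/-- A set-valued operator is maximally monotone: it is monotone and its graph is not properly
contained in the graph of another monotone operator. -/
def IsMaximallyMonotone (A : H → Set H) : Prop :=
  IsMonotoneOp A ∧
    ∀ A' : H → Set H, IsMonotoneOp A' → (∀ x, A x ⊆ A' x) → A' = A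

/-- `B` is `β`-cocoercive. -/
def IsCocoercive (β : ℝ) (B : H → H) : Prop :=
  ∀ x y : H, β * ‖B x - B y‖ ^ 2 ≤ ⟪B x - B y, x - y⟫_ℝ

/-- `J γ` is the resolvent `J_{γA}` of `A`, i.e. the single-valued, everywhere defined map
characterized by `y = J_{γA}(x) ↔ (x − y)/γ ∈ A(y)`. -/
def IsResolventFamily (A : H → Set H) (J : ℝ → H → H) : Prop :=
  ∀ γ : ℝ, 0 < γ → ∀ x y : H, J γ x = y ↔ γ⁻¹ • (x - y) ∈ A y

/-- `T_{λ,γ} = (1/λ)[Id − J_{γA}∘(Id − γB)]`. -/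
noncomputable def Tmap (J : ℝ → H → H) (B : H → H) (lam gam : ℝ) (x : H) : H :=
  (1 / lam) • (x - J gam (x - gam • B x))

/-- The Yosida approximation `A_γ = (Id − J_{γA})/γ`. -/
noncomputable def yosida (J : ℝ → H → H) (gam : ℝ) (u : H) : H :=
  (1 / gam) • (u - J gam u)

/-- `zer(A + B) = {x ∈ H : 0 ∈ Ax + Bx}`. -/
def zerSum (A : H → Set H) (B : H → H) : Set H := {x | ∃ a ∈ A x, a + B x = 0}

open Topology

theorem HasDerivAt.tendsto_norm_slope_nhdsGT {E : Type*} [NormedAddCommGroup E]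
    [NormedSpace ℝ E] {f : ℝ → E} {f' : E} {t : ℝ} (hf : HasDerivAt f f' t) :
    Tendsto (fun s => ‖slope f t s‖) (𝓝[>] t) (𝓝 ‖f'‖) :=
  ((hasDerivAt_iff_tendsto_slope.mp hf).mono_left (nhdsGT_le_nhdsNE t)).norm

theorem HasDerivAt.norm_le_of_eventually_norm_sub_le {E F G : Type*}
    [NormedAddCommGroup E] [NormedSpace ℝ E] [NormedAddCommGroup F] [NormedSpace ℝ F]
    [NormedAddCommGroup G] [NormedSpace ℝ G] {f : ℝ → E} {u : ℝ → F} {v : ℝ → G}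
    {f' : E} {u' : F} {v' : G} {t a b : ℝ}
    (hf : HasDerivAt f f' t) (hu : HasDerivAt u u' t) (hv : HasDerivAt v v' t)
    (h : ∀ᶠ s in 𝓝[>] t, ‖f s - f t‖ ≤ a * ‖u s - u t‖ + b * ‖v s - v t‖) :
    ‖f'‖ ≤ a * ‖u'‖ + b * ‖v'‖ := by
  refine le_of_tendsto_of_tendsto hf.tendsto_norm_slope_nhdsGT
    ((hu.tendsto_norm_slope_nhdsGT.const_mul a).add (hv.tendsto_norm_slope_nhdsGT.const_mul b)) ?_
  filter_upwards [h, self_mem_nhdsWithin] with s hs hts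
  have hinv : 0 < (s - t)⁻¹ := inv_pos.2 (sub_pos.2 hts)
  simp only [slope_def_module, norm_smul, Real.norm_eq_abs, abs_of_pos hinv]
  nlinarith

section MonotoneOperators

variable {E : Type*} [NormedAddCommGroup E] [InnerProductSpace ℝ E]

noncomputable def fbOp (J : ℝ → E → E) (B : E → E) (γ : ℝ) (p : E) : E :=
  J γ (p - γ • B p)

theorem smul_Tmap {J : ℝ → E → E} {B : E → E} {lam : ℝ} (hlam : lam ≠ 0) (γ : ℝ) (p : E) :
    lam • Tmap J B lam γ p = p - fbOp J B γ p := by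
  rw [Tmap, fbOp, smul_smul, mul_one_div_cancel hlam, one_smul]

theorem IsCocoercive.lipschitzWith_sub_smul {β : ℝ} {B : E → E} (hB : IsCocoercive β B)
    {γ : ℝ} (hγ₀ : 0 ≤ γ) (hγβ : γ ≤ 2 * β) : LipschitzWith 1 fun p => p - γ • B p := by
  refine lipschitzWith_iff_norm_sub_le.2 fun p q => ?_
  rw [NNReal.coe_one, one_mul]
  refine le_of_sq_le_sq ?_ (norm_nonneg _)
  -- `‖(p - q) - γ (Bp - Bq)‖² ≤ ‖p - q‖² - γ (2β - γ) ‖Bp - Bq‖²` by cocoercivity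
  rw [show p - γ • B p - (q - γ • B q) = (p - q) - γ • (B p - B q) by module,
    norm_sub_sq_real, real_inner_smul_right, norm_smul, Real.norm_eq_abs, abs_of_nonneg hγ₀,
    real_inner_comm]
  nlinarith [hB p q, mul_nonneg hγ₀ (sq_nonneg ‖B p - B q‖)]

namespace IsResolventFamily

variable {A : E → Set E} {J : ℝ → E → E}

theorem mem (hJ : IsResolventFamily A J) {γ : ℝ} (hγ : 0 < γ) (u : E) :
    γ⁻¹ • (u - J γ u) ∈ A (J γ u) :=
  (hJ γ hγ u (J γ u)).1 rfl

theorem lipschitzWith (hA : IsMonotoneOp A) (hJ : IsResolventFamily A J) {γ : ℝ}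
    (hγ : 0 < γ) : LipschitzWith 1 (J γ) := by
  refine lipschitzWith_iff_norm_sub_le.2 fun a b => ?_
  rw [NNReal.coe_one, one_mul]
  have hmono := hA _ _ _ _ (hJ.mem hγ a) (hJ.mem hγ b)
  rw [← smul_sub, real_inner_smul_left, mul_nonneg_iff_of_pos_left (inv_pos.2 hγ),
    sub_sub_sub_comm, inner_sub_left, real_inner_self_eq_norm_sq] at hmono
  nlinarith [real_inner_le_norm (a - b) (J γ a - J γ b), norm_nonneg (a - b),
    norm_nonneg (J γ a - J γ b)]

theorem resolvent_identity (hJ : IsResolventFamily A J) {γ δ : ℝ} (hγ : 0 < γ) (hδ : 0 < δ)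
    (u : E) : J δ ((δ / γ) • u + (1 - δ / γ) • J γ u) = J γ u := by
  refine (hJ δ hδ _ _).2 ?_
  rw [show (δ / γ) • u + (1 - δ / γ) • J γ u - J γ u = (δ / γ) • (u - J γ u) by module,
    smul_smul, show δ⁻¹ * (δ / γ) = γ⁻¹ by field_simp]
  exact hJ.mem hγ u

theorem norm_apply_sub_apply_le (hA : IsMonotoneOp A) (hJ : IsResolventFamily A J) {γ δ : ℝ}
    (hγ : 0 < γ) (hδ : 0 < δ) (u v : E) :
    ‖J γ u - J δ v‖ ≤ ‖u - v‖ + |γ - δ| / γ * ‖u - J γ u‖ := by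
  calc ‖J γ u - J δ v‖ = ‖J δ ((δ / γ) • u + (1 - δ / γ) • J γ u) - J δ v‖ := by
        rw [hJ.resolvent_identity hγ hδ]
    _ ≤ ‖(δ / γ) • u + (1 - δ / γ) • J γ u - v‖ := by
        simpa using (hJ.lipschitzWith hA hδ).norm_sub_le _ v
    _ = ‖(u - v) + ((δ - γ) / γ) • (u - J γ u)‖ := by
        congr 1
        rw [sub_div, div_self hγ.ne']
        module
    _ ≤ ‖u - v‖ + |γ - δ| / γ * ‖u - J γ u‖ := by
        refine (norm_add_le _ _).trans_eq ?_
        rw [norm_smul, Real.norm_eq_abs, abs_div, abs_of_pos hγ, abs_sub_comm]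

end IsResolventFamily

section ForwardBackward

variable {A : E → Set E} {J : ℝ → E → E} {β : ℝ} {B : E → E} {γ : ℝ}

theorem lipschitzWith_fbOp (hA : IsMonotoneOp A) (hJ : IsResolventFamily A J)
    (hB : IsCocoercive β B) (hγ : γ ∈ Set.Ioc 0 (2 * β)) : LipschitzWith 1 (fbOp J B γ) := by
  have := (hJ.lipschitzWith hA hγ.1).comp (hB.lipschitzWith_sub_smul hγ.1.le hγ.2)
  rwa [mul_one] at this

theorem fbOp_eq_self_of_mem_zerSum (hJ : IsResolventFamily A J) (hγ : 0 < γ) {xbar : E}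
    (hxbar : xbar ∈ zerSum A B) : fbOp J B γ xbar = xbar := by
  obtain ⟨a, ha, hab⟩ := hxbar
  refine (hJ γ hγ _ xbar).2 ?_
  rwa [sub_sub_cancel_left, smul_neg, smul_smul, inv_mul_cancel₀ hγ.ne', one_smul,
    ← eq_neg_of_add_eq_zero_left hab]

theorem norm_sub_fbOp_le (hA : IsMonotoneOp A) (hJ : IsResolventFamily A J)
    (hB : IsCocoercive β B) (hγ : γ ∈ Set.Ioc 0 (2 * β)) {xbar : E}
    (hxbar : xbar ∈ zerSum A B) (p : E) :
    ‖p - γ • B p - fbOp J B γ p‖ ≤ 2 * ‖p - xbar‖ + γ * ‖B p‖ := by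
  have hfix : ‖xbar - fbOp J B γ p‖ ≤ ‖p - xbar‖ := by
    have := (lipschitzWith_fbOp hA hJ hB hγ).norm_sub_le xbar p
    rwa [fbOp_eq_self_of_mem_zerSum hJ hγ.1 hxbar, NNReal.coe_one, one_mul,
      norm_sub_rev xbar p] at this
  calc ‖p - γ • B p - fbOp J B γ p‖
      = ‖(p - xbar) + (xbar - fbOp J B γ p) - γ • B p‖ := by congr 1; abel
    _ ≤ ‖p - xbar‖ + ‖xbar - fbOp J B γ p‖ + ‖γ • B p‖ :=
        (norm_sub_le _ _).trans (add_le_add_left (norm_add_le _ _) _)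
    _ ≤ 2 * ‖p - xbar‖ + γ * ‖B p‖ := by
        rw [norm_smul, Real.norm_eq_abs, abs_of_pos hγ.1]
        linarith

theorem norm_sub_fbOp_sub_sub_fbOp_le (hA : IsMonotoneOp A) (hJ : IsResolventFamily A J)
    (hB : IsCocoercive β B) (hγ : γ ∈ Set.Ioc 0 (2 * β)) {δ : ℝ} (hδ : δ ∈ Set.Ioc 0 (2 * β))
    {xbar : E} (hxbar : xbar ∈ zerSum A B) (p q : E) :
    ‖(q - fbOp J B δ q) - (p - fbOp J B γ p)‖ ≤
      2 * ‖q - p‖ + (2 * ‖B p‖ + 2 / γ * ‖p - xbar‖) * ‖δ - γ‖ := by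
  have hq : ‖fbOp J B δ q - fbOp J B δ p‖ ≤ ‖q - p‖ := by
    simpa using (lipschitzWith_fbOp hA hJ hB hδ).norm_sub_le q p
  have hparam : ‖fbOp J B γ p - fbOp J B δ p‖ ≤ |γ - δ| * ‖B p‖
      + |γ - δ| / γ * (2 * ‖p - xbar‖ + γ * ‖B p‖) := by
    refine (hJ.norm_apply_sub_apply_le hA hγ.1 hδ.1 _ _).trans ?_
    rw [show p - γ • B p - (p - δ • B p) = (δ - γ) • B p by module, norm_smul,
      Real.norm_eq_abs, abs_sub_comm]
    exact add_le_add le_rfl (mul_le_mul_of_nonneg_left (norm_sub_fbOp_le hA hJ hB hγ hxbar p)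
      (div_nonneg (abs_nonneg _) hγ.1.le))
  calc ‖(q - fbOp J B δ q) - (p - fbOp J B γ p)‖
      = ‖(q - p) - (fbOp J B δ q - fbOp J B δ p) + (fbOp J B γ p - fbOp J B δ p)‖ := by
        congr 1; abel
    _ ≤ ‖q - p‖ + ‖fbOp J B δ q - fbOp J B δ p‖ + ‖fbOp J B γ p - fbOp J B δ p‖ :=
        (norm_add_le _ _).trans (add_le_add_left (norm_sub_le _ _) _)
    _ ≤ 2 * ‖q - p‖ + (2 * ‖B p‖ + 2 / γ * ‖p - xbar‖) * ‖δ - γ‖ := by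
        rw [Real.norm_eq_abs, abs_sub_comm]
        have hγ₀ : γ ≠ 0 := hγ.1.ne'
        have : |γ - δ| / γ * (2 * ‖p - xbar‖ + γ * ‖B p‖)
            = |γ - δ| * ‖B p‖ + |γ - δ| * (2 / γ * ‖p - xbar‖) := by
          field_simp; ring
        linarith

end ForwardBackward

end MonotoneOperators

theorem deriv_lamT_estimate_general
    (A : H → Set H) (B : H → H) (β : ℝ)
    (hA : IsMaximallyMonotone A) (hB : IsCocoercive β B)
    (J : ℝ → H → H) (hJ : IsResolventFamily A J)
    (t₀ : ℝ)
    (lam gam gam' : ℝ → ℝ)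
    (hgamd : ∀ t ≥ t₀, HasDerivAt gam (gam' t) t)
    (hlampos : ∀ t ≥ t₀, 0 < lam t)
    (hgamrange : ∀ t ≥ t₀, gam t ∈ Set.Ioo 0 (2 * β))
    (x x' S' : ℝ → H)
    (hx : ∀ t ≥ t₀, HasDerivAt x (x' t) t)
    (hS : ∀ t ≥ t₀,
      HasDerivAt (fun s => lam s • Tmap J B (lam s) (gam s) (x s)) (S' t) t)
    (xbar : H) (hxbar : xbar ∈ zerSum A B) :
    ∀ t ≥ t₀, ‖S' t‖ ≤ 4 * ‖x' t‖ + 4 * β * (|gam' t| / gam t) * ‖B (x t)‖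
      + 2 * (|gam' t| / gam t) * ‖x t - xbar‖ := by
  intro t ht
  have hγ s (hs : s ≥ t₀) : gam s ∈ Set.Ioc 0 (2 * β) := Set.Ioo_subset_Ioc_self (hgamrange s hs)
  have hbound : ‖S' t‖ ≤ 2 * ‖x' t‖
      + (2 * ‖B (x t)‖ + 2 / gam t * ‖x t - xbar‖) * ‖gam' t‖ := by
    refine (hS t ht).norm_le_of_eventually_norm_sub_le (hx t ht) (hgamd t ht) ?_
    filter_upwards [self_mem_nhdsWithin] with s (hts : t < s)
    have hs : s ≥ t₀ := ht.trans hts.le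
    simp only [smul_Tmap (hlampos s hs).ne', smul_Tmap (hlampos t ht).ne']
    exact norm_sub_fbOp_sub_sub_fbOp_le hA.1 hJ hB (hγ t ht) (hγ s hs) hxbar (x t) (x s)
  obtain ⟨hγ₀, hγβ⟩ := hgamrange t ht
  have hratio : 0 ≤ |gam' t| / gam t := div_nonneg (abs_nonneg _) hγ₀.le
  have hsplit : (2 * ‖B (x t)‖ + 2 / gam t * ‖x t - xbar‖) * ‖gam' t‖
      = 2 * gam t * (|gam' t| / gam t) * ‖B (x t)‖
        + 2 * (|gam' t| / gam t) * ‖x t - xbar‖ := by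
    rw [Real.norm_eq_abs]; field_simp
  nlinarith [norm_nonneg (x' t), mul_nonneg hratio (norm_nonneg (B (x t)))]

/-- along a classic (C²) global solution of (Split-DIN-AVD), the derivative of
`t ↦ λ(t) T_{λ(t),γ(t)}(x(t))` satisfies the stated bound for every `t ≥ t₀`. -/
theorem deriv_lamT_estimate
    (A : H → Set H) (B : H → H) (β : ℝ) (hβ : 0 < β)
    (hA : IsMaximallyMonotone A) (hB : IsCocoercive β B)
    (J : ℝ → H → H) (hJ : IsResolventFamily A J)
    (hzer : (zerSum A B).Nonempty)
    (t₀ α ξ : ℝ) (ht₀ : 0 < t₀) (hα : 1 < α) (hξ : 0 ≤ ξ)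
    (lam gam lam' gam' : ℝ → ℝ)
    (hlamd : ∀ t ≥ t₀, HasDerivAt lam (lam' t) t)
    (hgamd : ∀ t ≥ t₀, HasDerivAt gam (gam' t) t)
    (hlampos : ∀ t ≥ t₀, 0 < lam t)
    (hgamrange : ∀ t ≥ t₀, gam t ∈ Set.Ioo 0 (2 * β))
    (x x' x'' T' S' : ℝ → H)
    (hx : ∀ t ≥ t₀, HasDerivAt x (x' t) t)
    (hx' : ∀ t ≥ t₀, HasDerivAt x' (x'' t) t)
    (hx''c : ContinuousOn x'' (Set.Ici t₀))
    (hT : ∀ t ≥ t₀, HasDerivAt (fun s => Tmap J B (lam s) (gam s) (x s)) (T' t) t)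
    (heq : ∀ t ≥ t₀,
      x'' t + (α / t) • x' t + ξ • T' t + Tmap J B (lam t) (gam t) (x t) = 0)
    (hS : ∀ t ≥ t₀,
      HasDerivAt (fun s => lam s • Tmap J B (lam s) (gam s) (x s)) (S' t) t)
    (xbar : H) (hxbar : xbar ∈ zerSum A B) :
    ∀ t ≥ t₀, ‖S' t‖ ≤ 4 * ‖x' t‖ + 4 * β * (|gam' t| / gam t) * ‖B (x t)‖
      + 2 * (|gam' t| / gam t) * ‖x t - xbar‖ :=
  deriv_lamT_estimate_general A B β hA hB J hJ t₀ lam gam gam' hgamd hlampos hgamrange x x' S' hx hS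
    xbar hxbar
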